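/- Let u, v, w : ℝ^d → ℝ be measurable functions satisfying w((x+y)/2) ≤ ½(u(x) + v(y)) for all x, y ∈ ℝ^d. Then (∫ e^{−u} dx)^{1/2} · (∫ e^{−v} dx)^{1/2} ≤ ∫ e^{−w} dx (Lebesgue integrals over ℝ^d). -/

import Mathlib

/-!
For `F x ^ a * G y ^ b ≤ H (a x + b y)` on `ℝ`, the superlevel sets satisfy
`a • {F > t} + b • {G > t} ⊆ {H > t}`, so Brunn–Minkowski on the line, `|A| + |B| ≤ |A + B|`,
and the layer-cake formula give `a ∫ F + b ∫ G ≤ ∫ H` when `sup F = sup G = 1`, the normalisation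
making both superlevel sets nonempty for the same `t`. Weighted AM–GM turns this into
`(∫ F)^a (∫ G)^b ≤ ∫ H`, an inequality invariant under scaling `F` and `G`, and truncation removes
the boundedness. The inequality tensorizes: applied on each fibre and then to the fibre integrals it
passes from `μ` and `ν` to `μ.prod ν` by Tonelli, hence to `ℝ^d`. The exponential form is the case
`a = b = 1/2`, `F = e^{-u}`, `G = e^{-v}`, `H = e^{-w}`.
-/

open MeasureTheory Real Set Filter Topology
open scoped Pointwise ENNReal NNReal

theorem ENNReal.rpow_mul_rpow_le_add {a b : ℝ} (ha : 0 < a) (hb : 0 < b) (hab : a + b = 1)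
    (x y : ℝ≥0∞) : x ^ a * y ^ b ≤ ENNReal.ofReal a * x + ENNReal.ofReal b * y := by
  rcases eq_or_ne x ∞ with rfl | hx
  · simp [ENNReal.mul_top, ha]
  rcases eq_or_ne y ∞ with rfl | hy
  · simp [ENNReal.mul_top, hb]
  lift x to ℝ≥0 using hx
  lift y to ℝ≥0 using hy
  have h := NNReal.geom_mean_le_arith_mean2_weighted a.toNNReal b.toNNReal x y
    (by rw [← Real.toNNReal_add ha.le hb.le, hab, Real.toNNReal_one])
  rw [Real.coe_toNNReal _ ha.le, Real.coe_toNNReal _ hb.le] at h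
  rw [← ENNReal.coe_rpow_of_nonneg _ ha.le, ← ENNReal.coe_rpow_of_nonneg _ hb.le,
    ENNReal.ofReal, ENNReal.ofReal]
  exact_mod_cast h

theorem MeasureTheory.lintegral_eq_lintegral_meas_ofReal_lt {α : Type*} [MeasurableSpace α]
    (μ : Measure α) {F : α → ℝ≥0∞} (hF : AEMeasurable F μ) :
    ∫⁻ x, F x ∂μ = ∫⁻ t in Ioi 0, μ {x | ENNReal.ofReal t < F x} := by
  by_cases hS : μ {x | F x = ∞} = 0
  · have hF_fin : ∀ᵐ x ∂μ, F x ≠ ∞ := measure_eq_zero_iff_ae_notMem.1 hS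
    have hF_eq : F =ᵐ[μ] fun x => ENNReal.ofReal (F x).toReal := by
      filter_upwards [hF_fin] with x hx using (ENNReal.ofReal_toReal hx).symm
    rw [lintegral_congr_ae hF_eq, lintegral_eq_lintegral_meas_lt μ
      (ae_of_all _ fun _ => ENNReal.toReal_nonneg) hF.ennreal_toReal]
    refine setLIntegral_congr_fun measurableSet_Ioi fun t ht => measure_congr ?_
    filter_upwards [hF_fin] with x hx
    exact propext (ENNReal.ofReal_lt_iff_lt_toReal (le_of_lt ht) hx).symm
  · rw [lintegral_eq_top_of_measure_eq_top_ne_zero hF hS, eq_comm, eq_top_iff]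
    calc ∞ = ∫⁻ _ in Ioi (0 : ℝ), μ {x | F x = ∞} := by
          rw [setLIntegral_const, Real.volume_Ioi, ENNReal.mul_top hS]
      _ ≤ _ := lintegral_mono fun t => measure_mono fun x (hx : F x = ∞) => by
          simp [hx]

theorem smul_setOf_lt_add_smul_setOf_lt_subset {E : Type*} [AddCommMonoid E] [Module ℝ E]
    {a b : ℝ} (ha : 0 < a) (hb : 0 < b) (hab : a + b = 1) {F G H : E → ℝ≥0∞}
    (h : ∀ x y, F x ^ a * G y ^ b ≤ H (a • x + b • y)) (t : ℝ≥0∞) :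
    a • {x | t < F x} + b • {y | t < G y} ⊆ {z | t < H z} := by
  rintro _ ⟨_, ⟨x, hx, rfl⟩, _, ⟨y, hy, rfl⟩, rfl⟩
  calc t = t ^ a * t ^ b := by
        rw [← ENNReal.rpow_add_of_nonneg _ _ ha.le hb.le, hab, ENNReal.rpow_one]
    _ < F x ^ a * G y ^ b :=
        ENNReal.mul_lt_mul (ENNReal.rpow_lt_rpow hx ha) (ENNReal.rpow_lt_rpow hy hb)
    _ ≤ H (a • x + b • y) := h x y

namespace Real

theorem volume_add_volume_le_volume_add_of_isCompact {K L : Set ℝ} (hK : IsCompact K)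
    (hL : IsCompact L) (hK₀ : K.Nonempty) (hL₀ : L.Nonempty) :
    volume K + volume L ≤ volume (K + L) := by
  -- Translates of `K` and `L` inside `K + L` that meet only at `sSup K + sInf L`.
  set U := sInf L +ᵥ K
  set V := sSup K +ᵥ L
  have hUV : U ∪ V ⊆ K + L := by
    rintro x (⟨k, hk, rfl⟩ | ⟨l, hl, rfl⟩)
    · exact ⟨k, hk, sInf L, hL.sInf_mem hL₀, add_comm _ _⟩
    · exact ⟨sSup K, hK.sSup_mem hK₀, l, hl, rfl⟩
  have hUV_null : volume (U ∩ V) = 0 := by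
    refine measure_mono_null (t := {sSup K + sInf L}) ?_ (measure_singleton _)
    rintro x ⟨⟨k, hk, rfl⟩, ⟨l, hl, hx⟩⟩
    have := le_csSup hK.bddAbove hk
    have := csInf_le hL.bddBelow hl
    simp only [vadd_eq_add] at hx ⊢
    exact mem_singleton_iff.2 (by linarith)
  calc volume K + volume L = volume U + volume V := by rw [measure_vadd, measure_vadd]
    _ = volume (U ∪ V) := by
      rw [← measure_union_add_inter U (hL.vadd _).measurableSet, hUV_null, add_zero]
    _ ≤ volume (K + L) := measure_mono hUV

theorem volume_add_volume_le_volume_add {A B : Set ℝ} (hA : MeasurableSet A)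
    (hB : MeasurableSet B) (hA₀ : A.Nonempty) (hB₀ : B.Nonempty) :
    volume A + volume B ≤ volume (A + B) := by
  obtain ⟨a, ha⟩ := hA₀
  obtain ⟨b, hb⟩ := hB₀
  rw [hA.measure_eq_iSup_isCompact, hB.measure_eq_iSup_isCompact]
  simp only [iSup_and']
  refine ENNReal.biSup_add_biSup_le' ⟨∅, empty_subset _, isCompact_empty⟩
    ⟨∅, empty_subset _, isCompact_empty⟩ fun K ⟨hKA, hK⟩ L ⟨hLB, hL⟩ => ?_
  calc volume K + volume L ≤ volume (insert a K) + volume (insert b L) :=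
        add_le_add (measure_mono (subset_insert _ _)) (measure_mono (subset_insert _ _))
    _ ≤ volume (insert a K + insert b L) :=
        volume_add_volume_le_volume_add_of_isCompact (hK.insert a) (hL.insert b)
          (insert_nonempty _ _) (insert_nonempty _ _)
    _ ≤ volume (A + B) :=
        measure_mono (add_subset_add (insert_subset ha hKA) (insert_subset hb hLB))

section

variable {a b : ℝ} {F G H : ℝ → ℝ≥0∞}

theorem ofReal_mul_lintegral_add_ofReal_mul_lintegral_le (ha : 0 < a) (hb : 0 < b)
    (hab : a + b = 1) (hF : Measurable F) (hG : Measurable G) (hH : Measurable H)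
    (hF₁ : ⨆ x, F x = 1) (hG₁ : ⨆ y, G y = 1)
    (h : ∀ x y, F x ^ a * G y ^ b ≤ H (a * x + b * y)) :
    ENNReal.ofReal a * (∫⁻ x, F x) + ENNReal.ofReal b * ∫⁻ y, G y ≤ ∫⁻ z, H z := by
  have level (t : ℝ) :
      ENNReal.ofReal a * volume {x | ENNReal.ofReal t < F x} +
        ENNReal.ofReal b * volume {y | ENNReal.ofReal t < G y} ≤
        volume {z | ENNReal.ofReal t < H z} := by
    rcases lt_or_ge (ENNReal.ofReal t) 1 with ht | ht
    · have hne {P : ℝ → ℝ≥0∞} (hP : ⨆ x, P x = 1) : {x | ENNReal.ofReal t < P x}.Nonempty := by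
        obtain ⟨x, hx⟩ := lt_iSup_iff.1 (hP ▸ ht)
        exact ⟨x, hx⟩
      calc _ = volume (a • {x | ENNReal.ofReal t < F x}) +
            volume (b • {y | ENNReal.ofReal t < G y}) := by
            simp only [Measure.addHaar_smul, Module.finrank_self, pow_one, abs_of_pos ha,
              abs_of_pos hb]
        _ ≤ volume (a • {x | ENNReal.ofReal t < F x} + b • {y | ENNReal.ofReal t < G y}) :=
            volume_add_volume_le_volume_add
              ((measurableSet_lt measurable_const hF).const_smul₀ a)
              ((measurableSet_lt measurable_const hG).const_smul₀ b)
              ((hne hF₁).smul_set) ((hne hG₁).smul_set)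
        _ ≤ _ := measure_mono (smul_setOf_lt_add_smul_setOf_lt_subset ha hb hab h _)
    · have hempty {P : ℝ → ℝ≥0∞} (hP : ⨆ x, P x = 1) : {x | ENNReal.ofReal t < P x} = ∅ :=
        eq_empty_of_forall_notMem fun x hx => (hx.trans_le (hP ▸ le_iSup P x)).not_ge ht
      simp [hempty hF₁, hempty hG₁]
  rw [lintegral_eq_lintegral_meas_ofReal_lt volume hF.aemeasurable,
    lintegral_eq_lintegral_meas_ofReal_lt volume hG.aemeasurable,
    lintegral_eq_lintegral_meas_ofReal_lt volume hH.aemeasurable,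
    ← lintegral_const_mul' _ _ ENNReal.ofReal_ne_top,
    ← lintegral_const_mul' _ _ ENNReal.ofReal_ne_top]
  exact (le_lintegral_add _ _).trans (lintegral_mono level)

theorem lintegral_rpow_mul_lintegral_rpow_le_of_iSup_ne_top (ha : 0 < a) (hb : 0 < b)
    (hab : a + b = 1) (hF : Measurable F) (hG : Measurable G) (hH : Measurable H)
    (hF_top : ⨆ x, F x ≠ ∞) (hG_top : ⨆ y, G y ≠ ∞)
    (h : ∀ x y, F x ^ a * G y ^ b ≤ H (a * x + b * y)) :
    (∫⁻ x, F x) ^ a * (∫⁻ y, G y) ^ b ≤ ∫⁻ z, H z := by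
  set MF := ⨆ x, F x
  set MG := ⨆ y, G y
  rcases eq_or_ne MF 0 with hMF | hMF
  · simp [ENNReal.iSup_eq_zero.1 hMF, ENNReal.zero_rpow_of_pos ha]
  rcases eq_or_ne MG 0 with hMG | hMG
  · simp [ENNReal.iSup_eq_zero.1 hMG, ENNReal.zero_rpow_of_pos hb]
  have hMFa : MF ^ a ≠ 0 := (ENNReal.rpow_pos (pos_iff_ne_zero.2 hMF) hF_top).ne'
  have hMGb : MG ^ b ≠ 0 := (ENNReal.rpow_pos (pos_iff_ne_zero.2 hMG) hG_top).ne'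
  have hMFa_top : MF ^ a ≠ ∞ := ENNReal.rpow_ne_top_of_nonneg ha.le hF_top
  have hMGb_top : MG ^ b ≠ ∞ := ENNReal.rpow_ne_top_of_nonneg hb.le hG_top
  set c := MF ^ a * MG ^ b
  have hc : c ≠ 0 := mul_ne_zero hMFa hMGb
  have hc_top : c ≠ ∞ := ENNReal.mul_ne_top hMFa_top hMGb_top
  have hnormalized := ofReal_mul_lintegral_add_ofReal_mul_lintegral_le ha hb hab
    (hF.const_mul MF⁻¹) (hG.const_mul MG⁻¹) (hH.const_mul c⁻¹)
    (by rw [← ENNReal.mul_iSup, ENNReal.inv_mul_cancel hMF hF_top])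
    (by rw [← ENNReal.mul_iSup, ENNReal.inv_mul_cancel hMG hG_top]) fun x y => by
      rw [ENNReal.mul_rpow_of_nonneg _ _ ha.le, ENNReal.mul_rpow_of_nonneg _ _ hb.le,
        ENNReal.inv_rpow, ENNReal.inv_rpow, mul_mul_mul_comm,
        ← ENNReal.mul_inv (Or.inl hMFa) (Or.inl hMFa_top)]
      exact mul_le_mul_right (h x y) _
  rw [lintegral_const_mul _ hF, lintegral_const_mul _ hG, lintegral_const_mul _ hH]
    at hnormalized
  calc (∫⁻ x, F x) ^ a * (∫⁻ y, G y) ^ b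
      = c * ((MF⁻¹ * ∫⁻ x, F x) ^ a * (MG⁻¹ * ∫⁻ y, G y) ^ b) := by
        rw [ENNReal.mul_rpow_of_nonneg _ _ ha.le, ENNReal.mul_rpow_of_nonneg _ _ hb.le,
          ENNReal.inv_rpow, ENNReal.inv_rpow, mul_mul_mul_comm (MF ^ a)⁻¹,
          ← ENNReal.mul_inv (Or.inl hMFa) (Or.inl hMFa_top), ← mul_assoc,
          ENNReal.mul_inv_cancel hc hc_top, one_mul]
    _ ≤ c * (ENNReal.ofReal a * (MF⁻¹ * ∫⁻ x, F x) + ENNReal.ofReal b * (MG⁻¹ * ∫⁻ y, G y)) :=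
        mul_le_mul_right (ENNReal.rpow_mul_rpow_le_add ha hb hab _ _) _
    _ ≤ c * (c⁻¹ * ∫⁻ z, H z) := mul_le_mul_right hnormalized _
    _ = ∫⁻ z, H z := by rw [← mul_assoc, ENNReal.mul_inv_cancel hc hc_top, one_mul]

end

end Real

def PrekopaLeindler {E : Type*} [MeasurableSpace E] [AddCommMonoid E] [Module ℝ E]
    (μ : Measure E) (a b : ℝ) : Prop :=
  ∀ ⦃F G H : E → ℝ≥0∞⦄, Measurable F → Measurable G → Measurable H →
    (∀ x y, F x ^ a * G y ^ b ≤ H (a • x + b • y)) →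
    (∫⁻ x, F x ∂μ) ^ a * (∫⁻ y, G y ∂μ) ^ b ≤ ∫⁻ z, H z ∂μ

namespace PrekopaLeindler

variable {E E' : Type*} [MeasurableSpace E] [AddCommMonoid E] [Module ℝ E]
  [MeasurableSpace E'] [AddCommMonoid E'] [Module ℝ E'] {a b : ℝ}

theorem dirac_zero : PrekopaLeindler (Measure.dirac (0 : E)) a b := by
  intro F G H hF hG hH h
  simpa [lintegral_dirac' _ hF, lintegral_dirac' _ hG, lintegral_dirac' _ hH] using h 0 0

theorem prod {μ : Measure E} {ν : Measure E'} [SFinite ν] (hμ : PrekopaLeindler μ a b)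
    (hν : PrekopaLeindler ν a b) : PrekopaLeindler (μ.prod ν) a b := by
  intro F G H hF hG hH h
  rw [lintegral_prod _ hF.aemeasurable, lintegral_prod _ hG.aemeasurable,
    lintegral_prod _ hH.aemeasurable]
  exact hμ hF.lintegral_prod_right' hG.lintegral_prod_right' hH.lintegral_prod_right'
    fun x y => hν (hF.comp measurable_prodMk_left) (hG.comp measurable_prodMk_left)
      (hH.comp measurable_prodMk_left) fun z w => h (x, z) (y, w)

theorem map {μ : Measure E} {ν : Measure E'} (hμ : PrekopaLeindler μ a b) {e : E → E'}
    (he : IsLinearMap ℝ e) (he_mp : MeasurePreserving e μ ν) : PrekopaLeindler ν a b := by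
  intro F G H hF hG hH h
  rw [← he_mp.lintegral_comp hF, ← he_mp.lintegral_comp hG, ← he_mp.lintegral_comp hH]
  refine hμ (hF.comp he_mp.measurable) (hG.comp he_mp.measurable) (hH.comp he_mp.measurable)
    fun x y => ?_
  simpa only [Function.comp_apply, he.map_add, he.map_smul] using h (e x) (e y)

theorem volume_real (ha : 0 < a) (hb : 0 < b) (hab : a + b = 1) :
    PrekopaLeindler (volume : Measure ℝ) a b := by
  intro F G H hF hG hH h
  rcases eq_or_ne (∫⁻ x, F x) 0 with hF₀ | hF₀
  · simp [hF₀, ENNReal.zero_rpow_of_pos ha]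
  rcases eq_or_ne (∫⁻ y, G y) 0 with hG₀ | hG₀
  · simp [hG₀, ENNReal.zero_rpow_of_pos hb]
  have htrunc (n : ℕ) : (∫⁻ x, min (F x) n) ^ a * (∫⁻ y, min (G y) n) ^ b ≤ ∫⁻ z, H z :=
    Real.lintegral_rpow_mul_lintegral_rpow_le_of_iSup_ne_top ha hb hab
      (hF.min measurable_const) (hG.min measurable_const) hH
      (ne_top_of_le_ne_top (ENNReal.natCast_ne_top n) (iSup_le fun _ => min_le_right _ _))
      (ne_top_of_le_ne_top (ENNReal.natCast_ne_top n) (iSup_le fun _ => min_le_right _ _))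
      fun x y => (mul_le_mul' (ENNReal.rpow_le_rpow (min_le_left _ _) ha.le)
        (ENNReal.rpow_le_rpow (min_le_left _ _) hb.le)).trans (h x y)
  have hlim {P : ℝ → ℝ≥0∞} (hP : Measurable P) (c : ℝ) :
      Tendsto (fun n : ℕ => (∫⁻ x, min (P x) n) ^ c) atTop (𝓝 ((∫⁻ x, P x) ^ c)) :=
    (ENNReal.continuous_rpow_const.tendsto _).comp <| lintegral_tendsto_of_tendsto_of_monotone
      (fun n => (hP.min measurable_const).aemeasurable)
      (ae_of_all _ fun x m n hmn => min_le_min le_rfl (Nat.cast_le.2 hmn))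
      (ae_of_all _ fun x => by simpa using tendsto_const_nhds.min ENNReal.tendsto_nat_nhds_top)
  exact le_of_tendsto' (ENNReal.Tendsto.mul (hlim hF a) (Or.inl (by simp [hF₀, ha.le]))
    (hlim hG b) (Or.inl (by simp [hG₀, hb.le]))) htrunc

theorem volume_pi_fin (ha : 0 < a) (hb : 0 < b) (hab : a + b = 1) :
    ∀ d : ℕ, PrekopaLeindler (volume : Measure (Fin d → ℝ)) a b
  | 0 => by rw [Measure.volume_pi_eq_dirac 0]; exact dirac_zero
  | d + 1 => by
    refine ((volume_real ha hb hab).prod (volume_pi_fin ha hb hab d)).map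
      (e := (MeasurableEquiv.piFinSuccAbove (fun _ => ℝ) 0).symm) ⟨fun p q => ?_, fun c p => ?_⟩
      (measurePreserving_piFinSuccAbove (fun _ => volume) 0).symm <;>
    · ext i
      refine Fin.cases ?_ (fun j => ?_) i <;> simp [MeasurableEquiv.piFinSuccAbove]

theorem volume_pi (ha : 0 < a) (hb : 0 < b) (hab : a + b = 1) (ι : Type*) [Fintype ι] :
    PrekopaLeindler (volume : Measure (ι → ℝ)) a b :=
  (volume_pi_fin ha hb hab _).map
    (e := MeasurableEquiv.arrowCongr' (Fintype.equivFin ι).symm (.refl ℝ))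
    ⟨fun _ _ => rfl, fun _ _ => rfl⟩ (volume_preserving_arrowCongr' _ _ (.id volume))

theorem volume_euclideanSpace (ha : 0 < a) (hb : 0 < b) (hab : a + b = 1) (ι : Type*)
    [Fintype ι] : PrekopaLeindler (volume : Measure (EuclideanSpace ℝ ι)) a b :=
  (volume_pi ha hb hab ι).map ⟨fun _ _ => WithLp.toLp_add _ _ _, fun _ _ => WithLp.toLp_smul _ _ _⟩
    (PiLp.volume_preserving_toLp ι)

end PrekopaLeindler

/-- The Prékopa–Leindler inequality in exponential form: if `u, v, w` are measurable
with `w((x+y)/2) ≤ ½(u(x) + v(y))` for all `x, y`, then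
`(∫ e^{-u})^{1/2} (∫ e^{-v})^{1/2} ≤ ∫ e^{-w}` (Lebesgue integrals over `ℝ^d`). -/
theorem prekopa_leindler_exp (d : ℕ) (u v w : EuclideanSpace ℝ (Fin d) → ℝ)
    (hu : Measurable u) (hv : Measurable v) (hw : Measurable w)
    (h : ∀ x y : EuclideanSpace ℝ (Fin d),
      w ((2 : ℝ)⁻¹ • (x + y)) ≤ (u x + v y) / 2) :
    (∫⁻ x, ENNReal.ofReal (Real.exp (-u x))) ^ (1 / 2 : ℝ) *
      (∫⁻ x, ENNReal.ofReal (Real.exp (-v x))) ^ (1 / 2 : ℝ) ≤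
      ∫⁻ x, ENNReal.ofReal (Real.exp (-w x)) := by
  have hexp (t : ℝ) :
      ENNReal.ofReal (exp (-t)) ^ (1 / 2 : ℝ) = ENNReal.ofReal (exp (-t / 2)) := by
    rw [ENNReal.ofReal_rpow_of_nonneg (exp_pos _).le (by norm_num), ← exp_mul]
    ring_nf
  refine PrekopaLeindler.volume_euclideanSpace (a := 1 / 2) (b := 1 / 2) (by norm_num)
    (by norm_num) (by norm_num) (Fin d) (by fun_prop) (by fun_prop) (by fun_prop) fun x y => ?_
  rw [hexp, hexp, ← ENNReal.ofReal_mul (exp_pos _).le, ← exp_add, ← smul_add, one_div]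
  exact ENNReal.ofReal_le_ofReal (exp_le_exp.2 (by linarith [h x y]))
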